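/- Let n ≥ 8 and let a_1, …, a_s, b_1, …, b_t ≥ 4 be integers with Σ a_i = ⌊n/2⌋ and Σ b_j = ⌈n/2⌉. Let C_{a_i} and C_{b_j} be cycles on disjoint vertex sets of the indicated lengths, and let Δ = ⋃_{i,j} (C_{a_i} * C_{b_j}). Then Δ is a flag 3-dimensional Eulerian complex on n vertices with f_1(Δ) = ⌊n²/4⌋ + n. -/

import Mathlib

open Finset

/-- An abstract simplicial complex on vertex type `V`, given by a finite,
downward-closed family of finite faces containing the empty face. -/
structure SC (V : Type*) [DecidableEq V] where
  faces : Finset (Finset V)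
  empty_mem : ∅ ∈ faces
  down_closed : ∀ ⦃σ τ : Finset V⦄, σ ∈ faces → τ ⊆ σ → τ ∈ faces

namespace SC

variable {V : Type*} [DecidableEq V]

/-- The vertex set of a complex. -/
def vertexSet (Δ : SC V) : Finset V := Δ.faces.sup id

/-- `fNum Δ i` is the number of `i`-dimensional faces (faces of cardinality `i+1`). -/
def fNum (Δ : SC V) (i : ℕ) : ℕ := (Δ.faces.filter fun σ => σ.card = i + 1).card

/-- A complex is flag if it is the clique complex of its graph, i.e. every set of
vertices which is pairwise joined by edges is a face (equivalently, all minimal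
non-faces have cardinality two). -/
def IsFlag (Δ : SC V) : Prop :=
  ∀ σ : Finset V, (∀ u ∈ σ, ∀ v ∈ σ, ({u, v} : Finset V) ∈ Δ.faces) → σ ∈ Δ.faces

/-- The restriction `Δ[W]` of `Δ` to a set `W` of vertices. -/
def restrict (Δ : SC V) (W : Finset V) : SC V where
  faces := Δ.faces.filter fun σ => σ ⊆ W
  empty_mem := by simp [Δ.empty_mem]
  down_closed := by
    intro σ τ hσ hτ
    simp only [mem_filter] at hσ ⊢
    exact ⟨Δ.down_closed hσ.1 hτ, hτ.trans hσ.2⟩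

/-- The link of a face `σ` in `Δ`. -/
def link (Δ : SC V) (σ : Finset V) : SC V where
  faces := insert ∅ (Δ.faces.filter fun τ => Disjoint τ σ ∧ τ ∪ σ ∈ Δ.faces)
  empty_mem := mem_insert_self _ _
  down_closed := by
    intro τ ρ hτ hρ
    rcases mem_insert.1 hτ with h | h
    · subst h
      simp [Finset.subset_empty.1 hρ]
    · simp only [mem_filter] at h
      refine mem_insert.2 (Or.inr ?_)
      simp only [mem_filter]
      exact ⟨Δ.down_closed h.1 hρ, h.2.1.mono_left hρ,
        Δ.down_closed h.2.2 (Finset.union_subset_union hρ Finset.Subset.rfl)⟩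

/-- A facet is a maximal face. -/
def IsFacet (Δ : SC V) (σ : Finset V) : Prop :=
  σ ∈ Δ.faces ∧ ∀ τ ∈ Δ.faces, σ ⊆ τ → σ = τ

/-- `Δ` is pure of dimension `D`: all faces have dimension at most `D` and all
facets have dimension exactly `D`. -/
def Pure (Δ : SC V) (D : ℕ) : Prop :=
  (∀ σ ∈ Δ.faces, σ.card ≤ D + 1) ∧ (∃ σ ∈ Δ.faces, σ.card = D + 1) ∧
    ∀ σ : Finset V, Δ.IsFacet σ → σ.card = D + 1

/-- The graph (1-skeleton) of a complex. -/
def graph (Δ : SC V) : SimpleGraph V where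
  Adj u v := u ≠ v ∧ ({u, v} : Finset V) ∈ Δ.faces
  symm := by
    refine ⟨fun u v h => ?_⟩
    exact ⟨h.1.symm, by rw [Finset.pair_comm]; exact h.2⟩
  loopless := by refine ⟨fun u h => ?_⟩; exact h.1 rfl

/-- A complex is connected if its vertex set is nonempty and any two vertices are
joined by a path in its graph. -/
def Connected (Δ : SC V) : Prop :=
  Δ.vertexSet.Nonempty ∧ ∀ u ∈ Δ.vertexSet, ∀ v ∈ Δ.vertexSet, Δ.graph.Reachable u v

/-- The reduced Euler characteristic `χ̃(Δ) = -1 + f₀ - f₁ + f₂ - ⋯`. -/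
def redChar (Δ : SC V) : ℤ := -∑ σ ∈ Δ.faces, (-1 : ℤ) ^ σ.card

/-- `Δ` is an Eulerian complex of dimension `D`: it is pure of dimension `D` and the
reduced Euler characteristic of the link of every face `σ` (including `σ = ∅`)
equals `(-1) ^ (dim lk σ)`, written multiplicatively to avoid signed dimensions. -/
def IsEulerian (Δ : SC V) (D : ℕ) : Prop :=
  Δ.Pure D ∧ ∀ σ ∈ Δ.faces, (Δ.link σ).redChar * (-1) ^ σ.card = (-1) ^ D

/-- A weak pseudomanifold of dimension `D`: pure and every ridge ((D-1)-face) lies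
in exactly two facets. -/
def IsWeakPseudo (Δ : SC V) (D : ℕ) : Prop :=
  Δ.Pure D ∧ ∀ σ ∈ Δ.faces, σ.card = D →
    (Δ.faces.filter fun τ => σ ⊆ τ ∧ τ.card = D + 1).card = 2

/-- A normal pseudomanifold of dimension `D`: a connected weak pseudomanifold all of
whose links of faces of dimension `≤ D - 2` are connected. -/
def IsNormalPseudo (Δ : SC V) (D : ℕ) : Prop :=
  Δ.IsWeakPseudo D ∧ Δ.Connected ∧
    ∀ σ ∈ Δ.faces, σ.card + 1 ≤ D → (Δ.link σ).Connected

/-- The join of two complexes (on disjoint vertex sets). -/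
def join (Δ Γ : SC V) : SC V where
  faces := (Δ.faces ×ˢ Γ.faces).image fun p => p.1 ∪ p.2
  empty_mem := Finset.mem_image.2 ⟨(∅, ∅),
    Finset.mem_product.2 ⟨Δ.empty_mem, Γ.empty_mem⟩, Finset.union_empty ∅⟩
  down_closed := by
    intro σ τ hσ hτ
    rw [Finset.mem_image] at hσ ⊢
    obtain ⟨⟨a, b⟩, hab, rfl⟩ := hσ
    rw [Finset.mem_product] at hab
    refine ⟨(τ ∩ a, τ ∩ b), Finset.mem_product.2
      ⟨Δ.down_closed hab.1 Finset.inter_subset_right,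
       Γ.down_closed hab.2 Finset.inter_subset_right⟩, ?_⟩
    rw [← Finset.inter_union_distrib_left]
    exact Finset.inter_eq_left.2 hτ

/-- The trivial complex, whose only face is the empty face (identity for join). -/
def trivialSC : SC V where
  faces := {∅}
  empty_mem := Finset.mem_singleton_self ∅
  down_closed := by
    intro σ τ hσ hτ
    simp only [Finset.mem_singleton] at hσ ⊢
    subst hσ
    exact Finset.subset_empty.1 hτ

/-- The join of a finite family of complexes. -/
def bigJoin : {k : ℕ} → (Fin k → SC V) → SC V
  | 0, _ => trivialSC
  | _ + 1, C => (C 0).join (bigJoin fun i => C i.succ)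

/-- `Δ` is a cycle (circle) with `n` vertices: a connected, 1-dimensional complex
all of whose vertices have exactly two neighbours. -/
def IsCycle (Δ : SC V) (n : ℕ) : Prop :=
  Δ.vertexSet.card = n ∧ (∀ σ ∈ Δ.faces, σ.card ≤ 2) ∧
    (∀ v ∈ Δ.vertexSet, (Δ.link {v}).vertexSet.card = 2) ∧ Δ.Connected

/-- `Δ` is the boundary complex of the `d`-dimensional cross-polytope: its vertices
come in `d` antipodal pairs and the faces are exactly the sets containing at most
one vertex of each pair. -/
def IsCrossPolytopeBoundary (Δ : SC V) (d : ℕ) : Prop :=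
  ∃ x y : Fin d → V, Function.Injective x ∧ Function.Injective y ∧
    (∀ i j, x i ≠ y j) ∧
    ∀ σ : Finset V, σ ∈ Δ.faces ↔
      ((∀ v ∈ σ, ∃ i, v = x i ∨ v = y i) ∧ ∀ i, ¬(x i ∈ σ ∧ y i ∈ σ))

/-- `Δ` is a simplicial 2-sphere: a connected weak 2-pseudomanifold whose vertex
links are circles and whose reduced Euler characteristic is 1. -/
def IsSphere2 (Δ : SC V) : Prop :=
  Δ.Connected ∧ Δ.IsWeakPseudo 2 ∧
    (∀ v ∈ Δ.vertexSet, ∃ n, 3 ≤ n ∧ (Δ.link {v}).IsCycle n) ∧ Δ.redChar = 1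

/-- `Δ` is a (closed) simplicial 3-manifold: connected, pure of dimension 3, and the
link of every vertex is a simplicial 2-sphere. -/
def Is3Manifold (Δ : SC V) : Prop :=
  Δ.Connected ∧ Δ.Pure 3 ∧ ∀ v ∈ Δ.vertexSet, (Δ.link {v}).IsSphere2

/-- `Δ` is a disjoint union of cycles, each of length at least 4: it is
1-dimensional, 2-regular and its graph has no triangles. -/
def IsDisjointUnionOfCyclesGe4 (Δ : SC V) : Prop :=
  (∀ σ ∈ Δ.faces, σ.card ≤ 2) ∧
    (∀ v ∈ Δ.vertexSet, (Δ.link {v}).vertexSet.card = 2) ∧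
    ∀ u v w : V, ({u, v} : Finset V) ∈ Δ.faces → ({v, w} : Finset V) ∈ Δ.faces →
      ({u, w} : Finset V) ∈ Δ.faces → u = v ∨ v = w ∨ u = w

end SC

/-!
Write `A` and `B` for the unions of the cycles `C_{a_i}` and of the cycles `C_{b_j}`, so that
`Δ = A * B`. In `A` every vertex has exactly two neighbours, hence `A` has as many edges as
vertices, `χ̃(A) = -1`, and `A` is Eulerian of dimension 1; since all cycles have length at
least 4, `A` has no triangles and is therefore flag. The same holds for `B`. Both properties
pass to joins of complexes on disjoint vertex sets, with dimensions adding up plus one: the link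
of `α ∪ β` in `A * B` is `lk_A α * lk_B β`, and `χ̃(X * Y) = -χ̃(X) χ̃(Y)`. Finally
`f₁(A * B) = f₁(A) + f₀(A) f₀(B) + f₁(B) = ⌊n/2⌋ + ⌊n/2⌋ ⌈n/2⌉ + ⌈n/2⌉ = ⌊n²/4⌋ + n`.
-/

open Function

namespace SC

variable {V : Type*} [DecidableEq V]

@[ext]
theorem ext {Δ Γ : SC V} (h : Δ.faces = Γ.faces) : Δ = Γ := by
  cases Δ
  cases Γ
  congr

section Basic

variable {Δ : SC V} {σ ρ : Finset V} {u v : V}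

theorem subset_vertexSet (hσ : σ ∈ Δ.faces) : σ ⊆ Δ.vertexSet :=
  fun _ hv => mem_sup.2 ⟨σ, hσ, hv⟩

theorem mem_vertexSet : v ∈ Δ.vertexSet ↔ {v} ∈ Δ.faces := by
  refine ⟨fun h => ?_, fun h => subset_vertexSet h (mem_singleton_self v)⟩
  obtain ⟨σ, hσ, hv⟩ := mem_sup.1 h
  exact Δ.down_closed hσ (singleton_subset_iff.2 hv)

theorem mem_link_iff (hσ : σ ∈ Δ.faces) :
    ρ ∈ (Δ.link σ).faces ↔ Disjoint ρ σ ∧ ρ ∪ σ ∈ Δ.faces := by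
  simp only [link, mem_insert, mem_filter]
  constructor
  · rintro (rfl | ⟨-, h⟩)
    · simpa using hσ
    · exact h
  · rintro ⟨hd, hu⟩
    exact Or.inr ⟨Δ.down_closed hu subset_union_left, hd, hu⟩

theorem link_faces_subset (Δ : SC V) (σ : Finset V) : (Δ.link σ).faces ⊆ Δ.faces := by
  intro ρ hρ
  rcases mem_insert.1 hρ with rfl | hρ
  · exact Δ.empty_mem
  · exact (mem_filter.1 hρ).1

theorem vertexSet_link_subset : (Δ.link σ).vertexSet ⊆ Δ.vertexSet :=
  sup_mono (link_faces_subset Δ σ)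

theorem link_empty (Δ : SC V) : Δ.link ∅ = Δ := by
  ext ρ
  simp [mem_link_iff Δ.empty_mem]

theorem card_add_card_le_of_mem_link {d : ℕ} (h : ∀ τ ∈ Δ.faces, #τ ≤ d)
    (hσ : σ ∈ Δ.faces) (hρ : ρ ∈ (Δ.link σ).faces) : #ρ + #σ ≤ d := by
  obtain ⟨hd, hu⟩ := (mem_link_iff hσ).1 hρ
  exact card_union_of_disjoint hd ▸ h _ hu

theorem mem_vertexSet_link_singleton : u ∈ (Δ.link {v}).vertexSet ↔ Δ.graph.Adj v u := by
  rw [mem_vertexSet]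
  simp only [link, graph, mem_insert, mem_filter, singleton_ne_empty, false_or,
    disjoint_singleton, ← insert_eq, pair_comm u v]
  exact ⟨fun h => ⟨h.2.1.symm, h.2.2⟩, fun h => ⟨Δ.down_closed h.2 (by simp), h.1.symm, h.2⟩⟩

end Basic

def IsTwoRegular (Δ : SC V) : Prop := ∀ v ∈ Δ.vertexSet, #(Δ.link {v}).vertexSet = 2

def numFacesOfCard (Δ : SC V) (k : ℕ) : ℕ := #{σ ∈ Δ.faces | #σ = k}

theorem fNum_eq_numFacesOfCard (Δ : SC V) (i : ℕ) : Δ.fNum i = Δ.numFacesOfCard (i + 1) := rfl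

section Counting

variable {Δ : SC V}

theorem numFacesOfCard_zero (Δ : SC V) : Δ.numFacesOfCard 0 = 1 := by
  rw [numFacesOfCard, card_eq_one]
  exact ⟨∅, by ext σ; simpa using fun h => h ▸ Δ.empty_mem⟩

theorem numFacesOfCard_one (Δ : SC V) : Δ.numFacesOfCard 1 = #Δ.vertexSet := by
  have : {σ ∈ Δ.faces | #σ = 1} = Δ.vertexSet.image singleton := by
    ext σ
    simp only [mem_filter, card_eq_one, mem_image, mem_vertexSet]
    constructor
    · rintro ⟨hσ, v, rfl⟩
      exact ⟨v, hσ, rfl⟩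
    · rintro ⟨v, hv, rfl⟩
      exact ⟨hv, v, rfl⟩
  rw [numFacesOfCard, this, card_image_of_injective _ singleton_injective]

theorem numFacesOfCard_eq_zero {k : ℕ} (h : ∀ σ ∈ Δ.faces, #σ < k) :
    Δ.numFacesOfCard k = 0 := by
  rw [numFacesOfCard, card_eq_zero, filter_eq_empty_iff]
  exact fun σ hσ => (h σ hσ).ne

theorem redChar_eq_of_card_le_two (h : ∀ σ ∈ Δ.faces, #σ ≤ 2) :
    Δ.redChar = #Δ.vertexSet - 1 - Δ.numFacesOfCard 2 := by
  have hmaps : ∀ σ ∈ Δ.faces, #σ ∈ range 3 := fun σ hσ => mem_range.2 (by linarith [h σ hσ])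
  rw [redChar, ← sum_fiberwise_of_maps_to hmaps]
  simp only [sum_range_succ, range_zero, sum_empty]
  have hfiber : ∀ k, ∑ σ ∈ Δ.faces with #σ = k, (-1 : ℤ) ^ #σ = (-1) ^ k * Δ.numFacesOfCard k :=
    fun k => by rw [sum_congr rfl fun σ hσ => by rw [(mem_filter.1 hσ).2], sum_const,
      nsmul_eq_mul, mul_comm, numFacesOfCard]
  simp only [hfiber, numFacesOfCard_zero, numFacesOfCard_one]
  ring

theorem card_edges_mem_eq_card_vertexSet_link (v : V) :
    #{e ∈ {σ ∈ Δ.faces | #σ = 2} | v ∈ e} = #(Δ.link {v}).vertexSet := by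
  symm
  refine card_bij (fun u _ => {v, u}) (fun u hu => ?_) (fun u hu u' _ huu' => ?_) ?_
  · obtain ⟨hne, he⟩ := mem_vertexSet_link_singleton.1 hu
    simp [he, card_pair hne]
  · have hne := (mem_vertexSet_link_singleton.1 hu).1
    have : u ∈ ({v, u'} : Finset V) := huu' ▸ mem_insert_of_mem (mem_singleton_self u)
    simpa [hne.symm] using this
  · intro e he
    obtain ⟨⟨he, he2⟩, hve⟩ : (e ∈ Δ.faces ∧ #e = 2) ∧ v ∈ e := by simpa using he
    obtain ⟨u, hu⟩ := card_eq_one.1 (by rw [card_erase_of_mem hve, he2] : #(e.erase v) = 1)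
    have hev : e = {v, u} := by rw [← insert_erase hve, hu]
    refine ⟨u, mem_vertexSet_link_singleton.2 ⟨?_, hev ▸ he⟩, hev.symm⟩
    rintro rfl
    simp [hev] at he2

theorem numFacesOfCard_two_of_isTwoRegular (hreg : Δ.IsTwoRegular) :
    Δ.numFacesOfCard 2 = #Δ.vertexSet := by
  have hdeg : ∀ v ∈ Δ.vertexSet, #{e ∈ {σ ∈ Δ.faces | #σ = 2} | v ∈ e} = 2 := fun v hv =>
    (card_edges_mem_eq_card_vertexSet_link v).trans (hreg v hv)
  have hsum := sum_card_inter hdeg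
  rw [sum_congr rfl fun e he => by
    rw [inter_eq_right.2 (subset_vertexSet (mem_filter.1 he).1), (mem_filter.1 he).2],
    sum_const, smul_eq_mul] at hsum
  exact Nat.eq_of_mul_eq_mul_right two_pos hsum

end Counting

section OneDimensional

variable {Δ : SC V}

theorem exists_adj_of_isTwoRegular (hreg : Δ.IsTwoRegular)
    {v : V} (hv : v ∈ Δ.vertexSet) : ∃ u, Δ.graph.Adj v u := by
  obtain ⟨u, hu⟩ := card_pos.1 (by rw [hreg v hv]; norm_num)
  exact ⟨u, mem_vertexSet_link_singleton.1 hu⟩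

theorem exists_ssuperset_of_isTwoRegular (hreg : Δ.IsTwoRegular)
    (hne : Δ.vertexSet.Nonempty) {σ : Finset V} (hσ : σ ∈ Δ.faces) (h : #σ < 2) :
    ∃ τ ∈ Δ.faces, σ ⊂ τ := by
  obtain rfl | ⟨v, rfl⟩ : σ = ∅ ∨ ∃ v, σ = {v} := by
    rcases Nat.lt_succ_iff.1 h |>.lt_or_eq with h0 | h1
    · exact Or.inl (card_eq_zero.1 (by omega))
    · exact Or.inr (card_eq_one.1 h1)
  · obtain ⟨v, hv⟩ := hne
    exact ⟨{v}, mem_vertexSet.1 hv, by simp⟩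
  · obtain ⟨u, hvu, he⟩ := exists_adj_of_isTwoRegular hreg (mem_vertexSet.2 hσ)
    refine ⟨{v, u}, he, (ssubset_iff_of_subset (by simp)).2 ⟨u, by simp, ?_⟩⟩
    simpa using hvu.symm

theorem redChar_link_mul_of_isTwoRegular (h2 : ∀ σ ∈ Δ.faces, #σ ≤ 2)
    (hreg : Δ.IsTwoRegular) {σ : Finset V} (hσ : σ ∈ Δ.faces) :
    (Δ.link σ).redChar * (-1) ^ #σ = -1 := by
  rcases σ.eq_empty_or_nonempty with rfl | hne
  · rw [link_empty, redChar_eq_of_card_le_two h2, numFacesOfCard_two_of_isTwoRegular hreg]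
    simp
  have hlink : ∀ {ρ}, ρ ∈ (Δ.link σ).faces → #ρ + #σ ≤ 2 :=
    card_add_card_le_of_mem_link h2 hσ
  have hσ1 := card_pos.2 hne
  rw [redChar_eq_of_card_le_two fun ρ hρ => by have := hlink hρ; omega,
    numFacesOfCard_eq_zero fun ρ hρ => by have := hlink hρ; omega]
  obtain hσ1 | hσ2 : #σ = 1 ∨ #σ = 2 := by have := h2 σ hσ; omega
  · obtain ⟨v, rfl⟩ := card_eq_one.1 hσ1
    rw [hreg v (mem_vertexSet.2 hσ)]
    norm_num
  · have : (Δ.link σ).vertexSet = ∅ := eq_empty_of_forall_notMem fun u hu => by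
      have := hlink (mem_vertexSet.1 hu)
      simp at this
      omega
    rw [this, hσ2]
    norm_num

theorem isEulerian_one_of_isTwoRegular (h2 : ∀ σ ∈ Δ.faces, #σ ≤ 2) (hreg : Δ.IsTwoRegular)
    (hne : Δ.vertexSet.Nonempty) : Δ.IsEulerian 1 := by
  refine ⟨⟨h2, ?_, fun σ hσ => ?_⟩, fun σ hσ => redChar_link_mul_of_isTwoRegular h2 hreg hσ⟩
  · obtain ⟨v, hv⟩ := hne
    obtain ⟨u, hvu, he⟩ := exists_adj_of_isTwoRegular hreg hv
    exact ⟨_, he, card_pair hvu⟩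
  · by_contra hcard
    obtain ⟨τ, hτ, hστ⟩ :=
      exists_ssuperset_of_isTwoRegular hreg hne hσ.1 (by have := h2 σ hσ.1; omega)
    exact hστ.ne (hσ.2 τ hτ hστ.subset)

end OneDimensional

section Cycles

variable {Δ : SC V}

theorem Connected.vertexSet_subset_of_adj_closed (hc : Δ.Connected) {S : Finset V}
    (hS : ∀ x ∈ S, ∀ y, Δ.graph.Adj x y → y ∈ S) {u : V} (hu : u ∈ Δ.vertexSet) (huS : u ∈ S) :
    Δ.vertexSet ⊆ S := by
  have walk_mem : ∀ x y (p : Δ.graph.Walk x y), x ∈ S → y ∈ S := by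
    intro x y p
    induction p with
    | nil => exact id
    | cons hadj _ ih => exact fun hx => ih (hS _ hx _ hadj)
  intro v hv
  obtain ⟨p⟩ := hc.2 u hu v hv
  exact walk_mem u v p huS

theorem eq_or_eq_of_adj {x y z p : V} (hx : #(Δ.link {x}).vertexSet = 2)
    (hy : Δ.graph.Adj x y) (hz : Δ.graph.Adj x z) (hyz : y ≠ z) (hp : Δ.graph.Adj x p) :
    p = y ∨ p = z := by
  have hsub : {y, z} ⊆ (Δ.link {x}).vertexSet := by
    simp [insert_subset_iff, mem_vertexSet_link_singleton, hy, hz]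
  have := eq_of_subset_of_card_le hsub (by rw [hx, card_pair hyz])
  simpa [← this] using mem_vertexSet_link_singleton.2 hp

theorem IsCycle.not_triangle {m : ℕ} (h : Δ.IsCycle m) (hm : 4 ≤ m) {u v w : V}
    (huv : Δ.graph.Adj u v) (hvw : Δ.graph.Adj v w) (huw : Δ.graph.Adj u w) : False := by
  obtain ⟨hcard, -, hreg, hc⟩ := h
  have hV : ∀ {x y}, Δ.graph.Adj x y → x ∈ Δ.vertexSet := fun hxy =>
    subset_vertexSet hxy.2 (mem_insert_self _ _)
  have hclosed : ∀ x ∈ ({u, v, w} : Finset V), ∀ y, Δ.graph.Adj x y →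
      y ∈ ({u, v, w} : Finset V) := by
    intro x hx y hxy
    simp only [mem_insert, mem_singleton] at hx ⊢
    rcases hx with rfl | rfl | rfl
    · have := eq_or_eq_of_adj (hreg _ (hV huv)) huv huw hvw.ne hxy
      tauto
    · have := eq_or_eq_of_adj (hreg _ (hV hvw)) huv.symm hvw huw.ne hxy
      tauto
    · have := eq_or_eq_of_adj (hreg _ (hV huw.symm)) huw.symm hvw.symm huv.ne hxy
      tauto
  have := card_le_card (hc.vertexSet_subset_of_adj_closed hclosed (hV huv) (mem_insert_self _ _))
  have := card_le_three (a := u) (b := v) (c := w)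
  omega

theorem isFlag_of_triangleFree (htri : ∀ u v w : V, ({u, v} : Finset V) ∈ Δ.faces →
      ({v, w} : Finset V) ∈ Δ.faces → ({u, w} : Finset V) ∈ Δ.faces → u = v ∨ v = w ∨ u = w) :
    Δ.IsFlag := by
  intro σ hσ
  by_cases h3 : 2 < #σ
  · obtain ⟨u, hu, v, hv, w, hw, huv, huw, hvw⟩ := two_lt_card.1 h3
    have := htri u v w (hσ u hu v hv) (hσ v hv w hw) (hσ u hu w hw)
    tauto
  interval_cases hc : #σ
  · rw [card_eq_zero.1 hc]
    exact Δ.empty_mem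
  · obtain ⟨u, rfl⟩ := card_eq_one.1 hc
    simpa using hσ u (mem_singleton_self u) u (mem_singleton_self u)
  · obtain ⟨u, v, -, rfl⟩ := card_eq_two.1 hc
    exact hσ u (by simp) v (by simp)

end Cycles

section Join

variable {A B : SC V} {σ α β : Finset V}

theorem mem_join : σ ∈ (A.join B).faces ↔ ∃ α ∈ A.faces, ∃ β ∈ B.faces, α ∪ β = σ := by
  simp [join, and_assoc]

theorem union_mem_join (hα : α ∈ A.faces) (hβ : β ∈ B.faces) : α ∪ β ∈ (A.join B).faces :=
  mem_join.2 ⟨α, hα, β, hβ, rfl⟩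

theorem join_comm (A B : SC V) : A.join B = B.join A := by
  ext σ
  simp only [mem_join]
  exact ⟨fun ⟨α, hα, β, hβ, h⟩ => ⟨β, hβ, α, hα, union_comm α β ▸ h⟩,
    fun ⟨β, hβ, α, hα, h⟩ => ⟨α, hα, β, hβ, union_comm β α ▸ h⟩⟩

theorem vertexSet_join : (A.join B).vertexSet = A.vertexSet ∪ B.vertexSet := by
  refine (Finset.sup_le fun σ hσ => ?_).antisymm (union_subset (fun v hv => ?_) fun v hv => ?_)
  · obtain ⟨α, hα, β, hβ, rfl⟩ := mem_join.1 hσ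
    exact union_subset_union (subset_vertexSet hα) (subset_vertexSet hβ)
  · exact mem_vertexSet.2 (by simpa using union_mem_join (mem_vertexSet.1 hv) B.empty_mem)
  · exact mem_vertexSet.2 (by simpa using union_mem_join A.empty_mem (mem_vertexSet.1 hv))

variable (hd : Disjoint A.vertexSet B.vertexSet)
include hd

theorem union_inter_vertexSet_left (hα : α ∈ A.faces) (hβ : β ∈ B.faces) :
    (α ∪ β) ∩ A.vertexSet = α := by
  rw [union_inter_distrib_right, inter_eq_left.2 (subset_vertexSet hα),
    disjoint_iff_inter_eq_empty.1 (hd.symm.mono_left (subset_vertexSet hβ)), union_empty]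

theorem mem_join_iff : σ ∈ (A.join B).faces ↔ σ ⊆ A.vertexSet ∪ B.vertexSet ∧
    σ ∩ A.vertexSet ∈ A.faces ∧ σ ∩ B.vertexSet ∈ B.faces := by
  refine ⟨fun hσ => ⟨vertexSet_join (A := A) (B := B) ▸ subset_vertexSet hσ, ?_⟩,
    fun ⟨hsub, hA, hB⟩ => ?_⟩
  · obtain ⟨α, hα, β, hβ, rfl⟩ := mem_join.1 hσ
    rw [union_inter_vertexSet_left hd hα hβ, union_comm,
      union_inter_vertexSet_left hd.symm hβ hα]
    exact ⟨hα, hβ⟩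
  · simpa [← inter_union_distrib_left, inter_eq_left.2 hsub] using union_mem_join hA hB

theorem card_eq_card_inter_add_card_inter (hσ : σ ⊆ A.vertexSet ∪ B.vertexSet) :
    #σ = #(σ ∩ A.vertexSet) + #(σ ∩ B.vertexSet) := by
  rw [← card_union_of_disjoint (hd.mono inter_subset_right inter_subset_right),
    ← inter_union_distrib_left, inter_eq_left.2 hσ]

theorem sum_faces_join {M : Type*} [AddCommMonoid M] (f : Finset V → M) :
    ∑ σ ∈ (A.join B).faces, f σ = ∑ α ∈ A.faces, ∑ β ∈ B.faces, f (α ∪ β) := by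
  change ∑ σ ∈ (A.faces ×ˢ B.faces).image (fun p => p.1 ∪ p.2), f σ = _
  rw [sum_image, sum_product]
  rintro ⟨α, β⟩ hαβ ⟨α', β'⟩ hαβ' h
  simp only [coe_product, Set.mem_prod, mem_coe] at hαβ hαβ' h
  have hα := union_inter_vertexSet_left hd hαβ.1 hαβ.2
  have hβ := union_inter_vertexSet_left hd.symm hαβ.2 hαβ.1
  rw [h, union_inter_vertexSet_left hd hαβ'.1 hαβ'.2] at hα
  rw [union_comm, h, union_comm, union_inter_vertexSet_left hd.symm hαβ'.2 hαβ'.1] at hβ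
  rw [hα, hβ]

theorem card_union_of_mem_faces (hα : α ∈ A.faces) (hβ : β ∈ B.faces) : #(α ∪ β) = #α + #β :=
  card_union_of_disjoint (hd.mono (subset_vertexSet hα) (subset_vertexSet hβ))

theorem redChar_join : (A.join B).redChar = -(A.redChar * B.redChar) := by
  simp only [redChar, sum_faces_join hd]
  rw [neg_mul_neg, sum_mul_sum]
  refine congrArg _ (sum_congr rfl fun α hα => sum_congr rfl fun β hβ => ?_)
  rw [card_union_of_mem_faces hd hα hβ, pow_add]

theorem numFacesOfCard_join (k : ℕ) : (A.join B).numFacesOfCard k =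
    ∑ p ∈ antidiagonal k, A.numFacesOfCard p.1 * B.numFacesOfCard p.2 := by
  have hsplit : ∀ a b : ℕ, (if a + b = k then 1 else 0 : ℕ) =
      ∑ p ∈ antidiagonal k, (if a = p.1 then 1 else 0) * (if b = p.2 then 1 else 0) := by
    intro a b
    have hpair : ∀ p : ℕ × ℕ, (a = p.1 ∧ b = p.2) ↔ (a, b) = p := fun p => by simp [Prod.ext_iff]
    simp_rw [ite_zero_mul_ite_zero, mul_one, hpair, sum_ite_eq, HasAntidiagonal.mem_antidiagonal]
  simp only [numFacesOfCard, card_filter, sum_faces_join hd]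
  rw [sum_congr rfl fun α hα => sum_congr rfl fun β hβ => by
    rw [card_union_of_mem_faces hd hα hβ, hsplit]]
  simp only [sum_mul_sum]
  exact (sum_congr rfl fun α _ => sum_comm).trans sum_comm

theorem fNum_one_join :
    (A.join B).fNum 1 = A.fNum 1 + #A.vertexSet * #B.vertexSet + B.fNum 1 := by
  have := numFacesOfCard_join hd 2
  simp only [Nat.sum_antidiagonal_succ, Nat.antidiagonal_zero, sum_singleton, zero_add,
    Nat.reduceAdd, numFacesOfCard_zero, numFacesOfCard_one] at this
  rw [fNum_eq_numFacesOfCard, fNum_eq_numFacesOfCard, fNum_eq_numFacesOfCard, this]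
  ring

theorem inter_vertexSet_mem_of_isFlag (hA : A.IsFlag)
    (hσ : ∀ u ∈ σ, ∀ v ∈ σ, ({u, v} : Finset V) ∈ (A.join B).faces) :
    σ ∩ A.vertexSet ∈ A.faces := by
  refine hA _ fun u hu v hv => ?_
  have hsub : ({u, v} : Finset V) ⊆ A.vertexSet := by
    simp [insert_subset_iff, (mem_inter.1 hu).2, (mem_inter.1 hv).2]
  simpa [inter_eq_left.2 hsub] using
    ((mem_join_iff hd).1 (hσ u (mem_inter.1 hu).1 v (mem_inter.1 hv).1)).2.1

theorem isFlag_join (hA : A.IsFlag) (hB : B.IsFlag) : (A.join B).IsFlag := by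
  intro σ hσ
  refine (mem_join_iff hd).2 ⟨fun v hv => ?_, inter_vertexSet_mem_of_isFlag hd hA hσ,
    inter_vertexSet_mem_of_isFlag hd.symm hB (join_comm A B ▸ hσ)⟩
  rw [← vertexSet_join, mem_vertexSet]
  simpa using hσ v hv v hv

theorem isFacet_inter_vertexSet (hσ : (A.join B).IsFacet σ) :
    A.IsFacet (σ ∩ A.vertexSet) := by
  obtain ⟨hsub, hσA, hσB⟩ := (mem_join_iff hd).1 hσ.1
  refine ⟨hσA, fun τ hτ hστ => ?_⟩
  have hσ_le : σ ⊆ τ ∪ σ ∩ B.vertexSet := by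
    intro v hv
    rcases mem_union.1 (hsub hv) with h | h
    · exact mem_union_left _ (hστ (mem_inter.2 ⟨hv, h⟩))
    · exact mem_union_right _ (mem_inter.2 ⟨hv, h⟩)
  rw [hσ.2 _ (union_mem_join hτ hσB) hσ_le, union_inter_vertexSet_left hd hτ hσB]

theorem pure_join {p q : ℕ} (hA : A.Pure p) (hB : B.Pure q) : (A.join B).Pure (p + q + 1) := by
  obtain ⟨hA_le, ⟨α, hα, hαc⟩, hA_facet⟩ := hA
  obtain ⟨hB_le, ⟨β, hβ, hβc⟩, hB_facet⟩ := hB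
  refine ⟨fun σ hσ => ?_, ⟨α ∪ β, union_mem_join hα hβ, ?_⟩, fun σ hσ => ?_⟩
  · obtain ⟨hsub, hσA, hσB⟩ := (mem_join_iff hd).1 hσ
    have := hA_le _ hσA
    have := hB_le _ hσB
    rw [card_eq_card_inter_add_card_inter hd hsub]
    omega
  · rw [card_union_of_mem_faces hd hα hβ, hαc, hβc]
    ring
  · have hA' := hA_facet _ (isFacet_inter_vertexSet hd hσ)
    have hB' := hB_facet _ (isFacet_inter_vertexSet hd.symm (join_comm A B ▸ hσ))
    rw [card_eq_card_inter_add_card_inter hd ((mem_join_iff hd).1 hσ.1).1, hA', hB']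
    ring

theorem link_join (hσ : σ ∈ (A.join B).faces) :
    (A.join B).link σ = (A.link (σ ∩ A.vertexSet)).join (B.link (σ ∩ B.vertexSet)) := by
  obtain ⟨hsub, hσA, hσB⟩ := (mem_join_iff hd).1 hσ
  have hσ_eq : σ = σ ∩ A.vertexSet ∪ σ ∩ B.vertexSet := by
    rw [← inter_union_distrib_left, inter_eq_left.2 hsub]
  ext ρ
  rw [mem_link_iff hσ, mem_join (A := A.link _)]
  constructor
  · rintro ⟨hρσ, hρσ_mem⟩
    obtain ⟨hsub', hA', hB'⟩ := (mem_join_iff hd).1 hρσ_mem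
    have hρσ' : ∀ W : Finset V, Disjoint (ρ ∩ W) (σ ∩ W) :=
      fun W => hρσ.mono inter_subset_left inter_subset_left
    refine ⟨ρ ∩ A.vertexSet, (mem_link_iff hσA).2 ⟨hρσ' _, ?_⟩,
      ρ ∩ B.vertexSet, (mem_link_iff hσB).2 ⟨hρσ' _, ?_⟩, ?_⟩
    · rwa [← union_inter_distrib_right]
    · rwa [← union_inter_distrib_right]
    · rw [← inter_union_distrib_left, inter_eq_left.2 (subset_union_left.trans hsub')]
  · rintro ⟨α, hα, β, hβ, rfl⟩
    obtain ⟨hα, hαA⟩ := (mem_link_iff hσA).1 hα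
    obtain ⟨hβ, hβB⟩ := (mem_link_iff hσB).1 hβ
    have hαV := subset_union_left.trans (subset_vertexSet hαA)
    have hβV := subset_union_left.trans (subset_vertexSet hβB)
    refine ⟨?_, ?_⟩
    · rw [hσ_eq, disjoint_union_left, disjoint_union_right, disjoint_union_right]
      exact ⟨⟨hα, hd.mono hαV inter_subset_right⟩, hd.symm.mono hβV inter_subset_right, hβ⟩
    · rw [hσ_eq, union_union_union_comm]
      exact union_mem_join hαA hβB

theorem isEulerian_join {p q : ℕ} (hA : A.IsEulerian p) (hB : B.IsEulerian q) :
    (A.join B).IsEulerian (p + q + 1) := by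
  refine ⟨pure_join hd hA.1 hB.1, fun σ hσ => ?_⟩
  obtain ⟨hsub, hσA, hσB⟩ := (mem_join_iff hd).1 hσ
  rw [link_join hd hσ, redChar_join (hd.mono vertexSet_link_subset vertexSet_link_subset),
    card_eq_card_inter_add_card_inter hd hsub, pow_add]
  calc _ = -(((A.link _).redChar * (-1) ^ #(σ ∩ A.vertexSet)) *
        ((B.link _).redChar * (-1) ^ #(σ ∩ B.vertexSet))) := by ring
    _ = (-1) ^ (p + q + 1) := by rw [hA.2 _ hσA, hB.2 _ hσB]; ring

end Join

def iUnion {ι : Type*} [Fintype ι] (C : ι → SC V) : SC V where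
  faces := insert ∅ (univ.biUnion fun i => (C i).faces)
  empty_mem := mem_insert_self _ _
  down_closed := by
    intro σ τ hσ hτ
    rcases mem_insert.1 hσ with rfl | hσ
    · simp [subset_empty.1 hτ]
    · obtain ⟨i, -, hi⟩ := mem_biUnion.1 hσ
      exact mem_insert_of_mem (mem_biUnion.2 ⟨i, mem_univ i, (C i).down_closed hi hτ⟩)

section Union

variable {ι : Type*} [Fintype ι] {C : ι → SC V} {σ : Finset V}

theorem mem_iUnion [Nonempty ι] : σ ∈ (iUnion C).faces ↔ ∃ i, σ ∈ (C i).faces := by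
  simp only [iUnion, mem_insert, mem_biUnion, mem_univ, true_and, or_iff_right_iff_imp]
  rintro rfl
  exact ⟨Classical.arbitrary ι, (C _).empty_mem⟩

theorem vertexSet_iUnion : (iUnion C).vertexSet = univ.biUnion fun i => (C i).vertexSet := by
  ext v
  simp [mem_vertexSet, iUnion]

theorem card_vertexSet_iUnion (hd : Pairwise (Disjoint on fun i => (C i).vertexSet)) :
    #(iUnion C).vertexSet = ∑ i, #(C i).vertexSet := by
  rw [vertexSet_iUnion, card_biUnion fun i _ j _ hij => hd hij]

theorem mem_faces_of_mem_iUnion (hd : Pairwise (Disjoint on fun i => (C i).vertexSet))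
    (hσ : σ ∈ (iUnion C).faces) {x : V} (hx : x ∈ σ) {i : ι} (hxi : x ∈ (C i).vertexSet) :
    σ ∈ (C i).faces := by
  rcases mem_insert.1 hσ with rfl | hσ
  · simp at hx
  obtain ⟨j, -, hj⟩ := mem_biUnion.1 hσ
  obtain rfl : j = i := by
    by_contra hji
    exact disjoint_left.1 (hd hji) (subset_vertexSet hj hx) hxi
  exact hj

theorem iUnion_graph_adj (hd : Pairwise (Disjoint on fun i => (C i).vertexSet)) {i : ι} {u v : V}
    (hv : v ∈ (C i).vertexSet) : (iUnion C).graph.Adj v u ↔ (C i).graph.Adj v u := by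
  refine ⟨fun h => ⟨h.1, mem_faces_of_mem_iUnion hd h.2 (mem_insert_self v _) hv⟩,
    fun h => ⟨h.1, mem_insert_of_mem (mem_biUnion.2 ⟨i, mem_univ i, h.2⟩)⟩⟩

theorem isDisjointUnionOfCyclesGe4_iUnion {m : ι → ℕ} (hC : ∀ i, (C i).IsCycle (m i))
    (hm : ∀ i, 4 ≤ m i) (hd : Pairwise (Disjoint on fun i => (C i).vertexSet)) :
    (iUnion C).IsDisjointUnionOfCyclesGe4 := by
  have hpiece : ∀ {v}, v ∈ (iUnion C).vertexSet → ∃ i, v ∈ (C i).vertexSet := fun hv => by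
    simpa [vertexSet_iUnion] using hv
  refine ⟨fun σ hσ => ?_, fun v hv => ?_, fun u v w huv hvw huw => ?_⟩
  · rcases mem_insert.1 hσ with rfl | hσ
    · simp
    · obtain ⟨i, -, hi⟩ := mem_biUnion.1 hσ
      exact (hC i).2.1 σ hi
  · obtain ⟨i, hi⟩ := hpiece hv
    have : ((iUnion C).link {v}).vertexSet = ((C i).link {v}).vertexSet := by
      ext u
      rw [mem_vertexSet_link_singleton, mem_vertexSet_link_singleton, iUnion_graph_adj hd hi]
    rw [this, (hC i).2.2.1 v hi]
  · by_contra! hne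
    obtain ⟨i, hi⟩ := hpiece (subset_vertexSet huv (mem_insert_self u _))
    have huv' := (iUnion_graph_adj hd hi).1 ⟨hne.1, huv⟩
    have hv : v ∈ (C i).vertexSet := subset_vertexSet huv'.2 (by simp)
    exact (hC i).not_triangle (hm i) huv' ((iUnion_graph_adj hd hv).1 ⟨hne.2.1, hvw⟩)
      ((iUnion_graph_adj hd hi).1 ⟨hne.2.2, huw⟩)

theorem vertexSet_subset_iUnion (i : ι) : (C i).vertexSet ⊆ (iUnion C).vertexSet :=
  vertexSet_iUnion (C := C) ▸ subset_biUnion_of_mem (fun i => (C i).vertexSet) (mem_univ i)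

theorem mem_join_iUnion {κ : Type*} [Fintype κ] [Nonempty ι] [Nonempty κ] {D : κ → SC V} :
    σ ∈ ((iUnion C).join (iUnion D)).faces ↔ ∃ i j, σ ∈ ((C i).join (D j)).faces := by
  simp only [mem_join, mem_iUnion]
  constructor
  · rintro ⟨α, ⟨i, hα⟩, β, ⟨j, hβ⟩, h⟩
    exact ⟨i, j, α, hα, β, hβ, h⟩
  · rintro ⟨i, j, α, hα, β, hβ, h⟩
    exact ⟨α, ⟨i, hα⟩, β, ⟨j, hβ⟩, h⟩

end Union

end SC

theorem Nat.div_two_mul_succ_div_two (n : ℕ) : n / 2 * ((n + 1) / 2) = n ^ 2 / 4 := by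
  obtain ⟨k, rfl | rfl⟩ := Nat.even_or_odd' n
  · rw [show 2 * k / 2 = k by omega, show (2 * k + 1) / 2 = k by omega,
      show (2 * k) ^ 2 = 4 * (k * k) by ring]
    omega
  · rw [show (2 * k + 1) / 2 = k by omega, show (2 * k + 1 + 1) / 2 = k + 1 by omega,
      show (2 * k + 1) ^ 2 = 4 * (k * k + k) + 1 by ring, Nat.mul_succ]
    omega

theorem statement_15_general {V : Type*} [DecidableEq V] (n s t : ℕ)
    (a : Fin s → ℕ) (b : Fin t → ℕ) (ha : ∀ i, 4 ≤ a i) (hb : ∀ j, 4 ≤ b j)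
    (hsa : ∑ i, a i = n / 2) (hsb : ∑ j, b j = (n + 1) / 2)
    (Ca : Fin s → SC V) (Cb : Fin t → SC V)
    (hCa : ∀ i, (Ca i).IsCycle (a i)) (hCb : ∀ j, (Cb j).IsCycle (b j))
    (hdisja : ∀ i i', i ≠ i' → Disjoint (Ca i).vertexSet (Ca i').vertexSet)
    (hdisjb : ∀ j j', j ≠ j' → Disjoint (Cb j).vertexSet (Cb j').vertexSet)
    (hdisjab : ∀ i j, Disjoint (Ca i).vertexSet (Cb j).vertexSet)
    (Δ : SC V)
    (hΔ : ∀ σ : Finset V, σ ∈ Δ.faces ↔ ∃ i j, σ ∈ ((Ca i).join (Cb j)).faces) :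
    Δ.IsFlag ∧ Δ.IsEulerian 3 ∧ Δ.vertexSet.card = n ∧
      Δ.fNum 1 = n ^ 2 / 4 + n := by
  obtain ⟨i₀, j₀, -⟩ := (hΔ ∅).1 Δ.empty_mem
  have : Nonempty (Fin s) := ⟨i₀⟩
  have : Nonempty (Fin t) := ⟨j₀⟩
  obtain rfl : Δ = (SC.iUnion Ca).join (SC.iUnion Cb) :=
    SC.ext (by ext σ; rw [hΔ, SC.mem_join_iUnion])
  set A := SC.iUnion Ca
  set B := SC.iUnion Cb
  have hd : Disjoint A.vertexSet B.vertexSet := by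
    simp only [A, B, SC.vertexSet_iUnion, disjoint_biUnion_left, disjoint_biUnion_right]
    exact fun j _ i _ => hdisjab i j
  have hVA : #A.vertexSet = n / 2 := by
    rw [SC.card_vertexSet_iUnion hdisja, ← hsa]
    exact sum_congr rfl fun i _ => (hCa i).1
  have hVB : #B.vertexSet = (n + 1) / 2 := by
    rw [SC.card_vertexSet_iUnion hdisjb, ← hsb]
    exact sum_congr rfl fun j _ => (hCb j).1
  obtain ⟨hA2, hAreg, hAtri⟩ := SC.isDisjointUnionOfCyclesGe4_iUnion hCa ha hdisja
  obtain ⟨hB2, hBreg, hBtri⟩ := SC.isDisjointUnionOfCyclesGe4_iUnion hCb hb hdisjb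
  have hAne := (hCa i₀).2.2.2.1.mono (SC.vertexSet_subset_iUnion i₀)
  have hBne := (hCb j₀).2.2.2.1.mono (SC.vertexSet_subset_iUnion j₀)
  refine ⟨SC.isFlag_join hd (SC.isFlag_of_triangleFree hAtri) (SC.isFlag_of_triangleFree hBtri),
    SC.isEulerian_join hd (SC.isEulerian_one_of_isTwoRegular hA2 hAreg hAne)
      (SC.isEulerian_one_of_isTwoRegular hB2 hBreg hBne), ?_, ?_⟩
  · rw [SC.vertexSet_join, card_union_of_disjoint hd, hVA, hVB]
    omega
  · rw [SC.fNum_one_join hd, SC.fNum_eq_numFacesOfCard, SC.fNum_eq_numFacesOfCard,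
      SC.numFacesOfCard_two_of_isTwoRegular hAreg, SC.numFacesOfCard_two_of_isTwoRegular hBreg,
      hVA, hVB, Nat.div_two_mul_succ_div_two]
    omega

/-- For `n ≥ 8` and cycles `C_{a_i}`, `C_{b_j}` of lengths `a_i, b_j ≥ 4`
with `Σ a_i = ⌊n/2⌋` and `Σ b_j = ⌈n/2⌉` on disjoint vertex sets, the complex
`Δ = ⋃_{i,j} (C_{a_i} * C_{b_j})` is a flag 3-dimensional Eulerian complex on `n`
vertices with `f₁(Δ) = ⌊n²/4⌋ + n`. -/
theorem statement_15 {V : Type*} [DecidableEq V] (n s t : ℕ) (hn : 8 ≤ n)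
    (a : Fin s → ℕ) (b : Fin t → ℕ) (ha : ∀ i, 4 ≤ a i) (hb : ∀ j, 4 ≤ b j)
    (hsa : ∑ i, a i = n / 2) (hsb : ∑ j, b j = (n + 1) / 2)
    (Ca : Fin s → SC V) (Cb : Fin t → SC V)
    (hCa : ∀ i, (Ca i).IsCycle (a i)) (hCb : ∀ j, (Cb j).IsCycle (b j))
    (hdisja : ∀ i i', i ≠ i' → Disjoint (Ca i).vertexSet (Ca i').vertexSet)
    (hdisjb : ∀ j j', j ≠ j' → Disjoint (Cb j).vertexSet (Cb j').vertexSet)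
    (hdisjab : ∀ i j, Disjoint (Ca i).vertexSet (Cb j).vertexSet)
    (Δ : SC V)
    (hΔ : ∀ σ : Finset V, σ ∈ Δ.faces ↔ ∃ i j, σ ∈ ((Ca i).join (Cb j)).faces) :
    Δ.IsFlag ∧ Δ.IsEulerian 3 ∧ Δ.vertexSet.card = n ∧
      Δ.fNum 1 = n ^ 2 / 4 + n :=
  statement_15_general n s t a b ha hb hsa hsb Ca Cb hCa hCb hdisja hdisjb hdisjab Δ hΔ
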